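/- The base dynamic-programming recurrence correctly counts ascent sequences: define f(n, a, l) by f(0, a, l) = 1 and f(n, a, l) = Σ_{i=0}^{a+1} f(n−1, a + χ(l<i), i) for n ≥ 1, where χ(l<i) is 1 if l < i and 0 otherwise. Then for n ≥ 1 the number of ascent sequences of length n equals f(n−1, 0, 0). -/

import Mathlib

open Filter Topology

/-- Number of ascents in a sequence (list) of naturals. -/
def asc (s : List ℕ) : ℕ :=
  ((s.zip s.tail).filter (fun p => p.1 < p.2)).length

/-- `s` is an ascent sequence: first entry `0`, and each later entry is at most
one more than the number of ascents of the preceding prefix. -/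
def IsAscentSeq (s : List ℕ) : Prop :=
  (0 < s.length → s.getD 0 0 = 0) ∧
  ∀ i, 0 < i → i < s.length → s.getD i 0 ≤ asc (s.take i) + 1

/-- `s` is a weak ascent sequence: every entry is at most the number of ascents. -/
def IsWeakAscentSeq (s : List ℕ) : Prop :=
  ∀ x ∈ s, x ≤ asc s

/-- `s` contains the pattern `p`: some subsequence of `s` is order-isomorphic
(including equalities) to `p`. -/
def ContainsPattern (s p : List ℕ) : Prop :=
  ∃ idx : Fin p.length → ℕ, StrictMono idx ∧ (∀ a, idx a < s.length) ∧
    ∀ a b : Fin p.length, p.get a < p.get b ↔ s.getD (idx a) 0 < s.getD (idx b) 0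

def AvoidsPattern (s p : List ℕ) : Prop := ¬ ContainsPattern s p

/-- A pattern of length `j` is a permutation of `0,…,j-1`. -/
def IsPattern (p : List ℕ) : Prop := List.Perm p (List.range p.length)

/-- Sum-indecomposable: no proper prefix whose entries are all smaller than
all entries of the complementary suffix. -/
def SumIndecomposable (p : List ℕ) : Prop :=
  ¬ ∃ i, 0 < i ∧ i < p.length ∧ ∀ x ∈ p.take i, ∀ y ∈ p.drop i, x < y

/-- Number of `p`-avoiding ascent sequences of length `k`. -/
noncomputable def ascentAvoidCount (p : List ℕ) (k : ℕ) : ℕ :=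
  {s : List ℕ | s.length = k ∧ IsAscentSeq s ∧ AvoidsPattern s p}.ncard

/-- Number of `p`-avoiding weak ascent sequences of length `k`. -/
noncomputable def weakAvoidCount (p : List ℕ) (k : ℕ) : ℕ :=
  {s : List ℕ | s.length = k ∧ IsWeakAscentSeq s ∧ AvoidsPattern s p}.ncard

def listMax (s : List ℕ) : ℕ := s.foldr max 0
def listMin (s : List ℕ) : ℕ := s.foldr min (listMax s)

/-- Reverse-complement map: `m j = max + min - n (k+1-j)`. -/
def revComp (s : List ℕ) : List ℕ :=
  s.reverse.map (fun x => listMax s + listMin s - x)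

/-- Occurrence of pattern 000: three equal entries. -/
def Contains000 (s : List ℕ) : Prop :=
  ∃ a b c, a < b ∧ b < c ∧ c < s.length ∧
    s.getD a 0 = s.getD b 0 ∧ s.getD b 0 = s.getD c 0

/-- Occurrence of pattern 100: `n i₁ > n i₂ = n i₃`. -/
def Contains100 (s : List ℕ) : Prop :=
  ∃ a b c, a < b ∧ b < c ∧ c < s.length ∧
    s.getD b 0 < s.getD a 0 ∧ s.getD b 0 = s.getD c 0

/-- Occurrence of pattern 110: `n i₁ = n i₂ > n i₃`. -/
def Contains110 (s : List ℕ) : Prop :=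
  ∃ a b c, a < b ∧ b < c ∧ c < s.length ∧
    s.getD a 0 = s.getD b 0 ∧ s.getD c 0 < s.getD b 0

/-- Occurrence of pattern 120: `n i₂ > n i₁ > n i₃`. -/
def Contains120 (s : List ℕ) : Prop :=
  ∃ a b c, a < b ∧ b < c ∧ c < s.length ∧
    s.getD a 0 < s.getD b 0 ∧ s.getD c 0 < s.getD a 0

/-- Occurrence of pattern 201: `n i₁ > n i₃ > n i₂`. -/
def Contains201 (s : List ℕ) : Prop :=
  ∃ a b c, a < b ∧ b < c ∧ c < s.length ∧
    s.getD c 0 < s.getD a 0 ∧ s.getD b 0 < s.getD c 0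

/-- Occurrence of pattern 012: `n i₁ < n i₂ < n i₃`. -/
def Contains012 (s : List ℕ) : Prop :=
  ∃ a b c, a < b ∧ b < c ∧ c < s.length ∧
    s.getD a 0 < s.getD b 0 ∧ s.getD b 0 < s.getD c 0

/-- Occurrence of pattern 011: `n i₁ < n i₂ = n i₃`. -/
def Contains011 (s : List ℕ) : Prop :=
  ∃ a b c, a < b ∧ b < c ∧ c < s.length ∧
    s.getD a 0 < s.getD b 0 ∧ s.getD b 0 = s.getD c 0

/-- Occurrence of pattern 021: `n i₁ < n i₃ < n i₂`. -/
def Contains021 (s : List ℕ) : Prop :=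
  ∃ a b c, a < b ∧ b < c ∧ c < s.length ∧
    s.getD a 0 < s.getD c 0 ∧ s.getD c 0 < s.getD b 0

/-- Occurrence of pattern 102: `n i₂ < n i₁ < n i₃`. -/
def Contains102 (s : List ℕ) : Prop :=
  ∃ a b c, a < b ∧ b < c ∧ c < s.length ∧
    s.getD b 0 < s.getD a 0 ∧ s.getD a 0 < s.getD c 0

/-- The construction `C = 0101⋯01 W̃₁⋯W̃ₖ` from weak ascent sequences. -/
def buildC (k : ℕ) (W : Fin k → List ℕ) : List ℕ :=
  (List.replicate k ([0,1] : List ℕ)).flatten ++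
    (List.ofFn (fun h : Fin k =>
      (W h).map (fun x =>
        x + 1 + ∑ j ∈ Finset.univ.filter (fun j => j < h), listMax (W j)))).flatten

/-- The base dynamic programming recurrence. -/
def fbase : ℕ → ℕ → ℕ → ℕ
  | 0, _, _ => 1
  | n + 1, a, l => ∑ i ∈ Finset.range (a + 2), fbase n (a + if l < i then 1 else 0) i

/-!
An ascent sequence is `0` followed by a suffix whose entries are constrained only through two
statistics of what precedes them: the number `a` of ascents and the last entry `l`. Such suffixes
are enumerated by choosing the first entry `i ≤ a + 1` and then a valid suffix for the updated
statistics `(a + [l < i], i)`; this is exactly the recurrence defining `fbase`.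
-/

/-- `t` may follow a sequence with `a` ascents and last entry `l` in an ascent sequence. -/
def IsAscentSuffix : ℕ → ℕ → List ℕ → Prop
  | _, _, [] => True
  | a, l, y :: t => y ≤ a + 1 ∧ IsAscentSuffix (a + if l < y then 1 else 0) y t

lemma asc_cons_cons (x y : ℕ) (t : List ℕ) :
    asc (x :: y :: t) = (if x < y then 1 else 0) + asc (y :: t) := by
  by_cases h : x < y <;> simp [asc, h, Nat.add_comm]

lemma asc_append_singleton (p : List ℕ) (hp : p ≠ []) (y : ℕ) :
    asc (p ++ [y]) = asc p + if p.getLast hp < y then 1 else 0 := by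
  induction p with
  | nil => contradiction
  | cons x q ih =>
    cases q with
    | nil => by_cases h : x < y <;> simp [asc, h]
    | cons z q =>
      rw [List.cons_append, List.cons_append, asc_cons_cons, ← List.cons_append,
        ih (List.cons_ne_nil z q), asc_cons_cons, List.getLast_cons (List.cons_ne_nil z q)]
      omega

/-- The ascent-sequence condition on the entries of `t` appended to a nonempty `p`. -/
lemma forall_getD_le_asc_take_iff (t p : List ℕ) (hp : p ≠ []) :
    (∀ j < t.length, t.getD j 0 ≤ asc ((p ++ t).take (p.length + j)) + 1) ↔
      IsAscentSuffix (asc p) (p.getLast hp) t := by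
  induction t generalizing p with
  | nil => simp [IsAscentSuffix]
  | cons y t ih =>
    have htake (j : ℕ) : (p ++ y :: t).take (p.length + (j + 1)) =
        (p ++ [y] ++ t).take ((p ++ [y]).length + j) := by
      simp only [List.append_assoc, List.cons_append, List.nil_append, List.length_append,
        List.length_singleton, Nat.add_right_comm, Nat.add_assoc]
    have hstep := ih (p ++ [y]) (by simp)
    rw [asc_append_singleton p hp, List.getLast_append_singleton] at hstep
    simp only [IsAscentSuffix, ← hstep, List.length_cons, Nat.forall_lt_succ_left,
      List.getD_cons_zero, List.getD_cons_succ, Nat.add_zero, List.take_left, htake]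

lemma isAscentSeq_zero_cons_iff (t : List ℕ) : IsAscentSeq (0 :: t) ↔ IsAscentSuffix 0 0 t := by
  have hsuffix := forall_getD_le_asc_take_iff t [0] (List.cons_ne_nil 0 [])
  rw [show asc [0] = 0 from rfl, List.getLast_singleton] at hsuffix
  simp only [IsAscentSeq, ← hsuffix, List.length_cons, List.getD_cons_zero, implies_true,
    true_and, List.singleton_append]
  refine ⟨fun h j hj => ?_, fun h i hi hlt => ?_⟩
  · simpa [Nat.add_comm 1] using h (j + 1) j.succ_pos (by omega)
  · obtain ⟨j, rfl⟩ := Nat.exists_eq_add_of_le' hi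
    simpa [Nat.add_comm 1] using h j (by omega)

def ascentSuffixes : ℕ → ℕ → ℕ → Finset (List ℕ)
  | 0, _, _ => {[]}
  | n + 1, a, l => (Finset.range (a + 2)).biUnion
      fun i => (ascentSuffixes n (a + if l < i then 1 else 0) i).image (i :: ·)

lemma card_ascentSuffixes (n a l : ℕ) : (ascentSuffixes n a l).card = fbase n a l := by
  induction n generalizing a l with
  | zero => rfl
  | succ n ih =>
    rw [ascentSuffixes, fbase, Finset.card_biUnion]
    · simp only [Finset.card_image_of_injective _ List.cons_injective, ih]
    · intro i _ j _ hij
      simp only [Function.onFun, Finset.disjoint_left, Finset.mem_image]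
      rintro _ ⟨u, _, rfl⟩ ⟨v, _, h⟩
      exact hij (List.head_eq_of_cons_eq h).symm

lemma mem_ascentSuffixes {n a l : ℕ} {t : List ℕ} :
    t ∈ ascentSuffixes n a l ↔ t.length = n ∧ IsAscentSuffix a l t := by
  induction n generalizing a l t with
  | zero =>
    simp only [ascentSuffixes, Finset.mem_singleton, List.length_eq_zero_iff]
    exact ⟨fun h => ⟨h, h ▸ trivial⟩, And.left⟩
  | succ n ih =>
    cases t with
    | nil => simp [ascentSuffixes]
    | cons y u =>
      simp only [ascentSuffixes, Finset.mem_biUnion, Finset.mem_range, Finset.mem_image,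
        List.cons.injEq, ih, IsAscentSuffix, List.length_cons, Nat.lt_succ_iff]
      constructor
      · rintro ⟨i, hi, v, ⟨hlen, hv⟩, rfl, rfl⟩
        exact ⟨by rw [hlen], hi, hv⟩
      · rintro ⟨hlen, hy, hu⟩
        exact ⟨y, hy, u, ⟨by omega, hu⟩, rfl, rfl⟩

lemma ncard_setOf_isAscentSuffix (n a l : ℕ) :
    {t : List ℕ | t.length = n ∧ IsAscentSuffix a l t}.ncard = fbase n a l := by
  rw [← card_ascentSuffixes, ← Set.ncard_coe_finset]
  congr 1
  ext t
  exact mem_ascentSuffixes.symm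

lemma setOf_isAscentSeq_eq_image (n : ℕ) :
    {s : List ℕ | s.length = n + 1 ∧ IsAscentSeq s} =
      (0 :: ·) '' {t : List ℕ | t.length = n ∧ IsAscentSuffix 0 0 t} := by
  ext s
  cases s with
  | nil => simp
  | cons y t =>
    simp only [Set.mem_ofPred_eq, Set.mem_image, List.cons.injEq, List.length_cons]
    constructor
    · rintro ⟨hlen, hs⟩
      obtain rfl : y = 0 := hs.1 (Nat.succ_pos _)
      exact ⟨t, ⟨by omega, (isAscentSeq_zero_cons_iff t).1 hs⟩, rfl, rfl⟩
    · rintro ⟨u, ⟨hlen, hu⟩, rfl, rfl⟩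
      exact ⟨by rw [hlen], (isAscentSeq_zero_cons_iff u).2 hu⟩

/-- The recurrence correctly counts ascent sequences: the number of ascent
sequences of length `n ≥ 1` is `f(n-1, 0, 0)`. -/
theorem stmt15 (n : ℕ) (hn : 1 ≤ n) :
    {s : List ℕ | s.length = n ∧ IsAscentSeq s}.ncard = fbase (n - 1) 0 0 := by
  obtain ⟨m, rfl⟩ := Nat.exists_eq_add_of_le' hn
  rw [Nat.add_sub_cancel, setOf_isAscentSeq_eq_image,
    Set.ncard_image_of_injective _ List.cons_injective, ncard_setOf_isAscentSuffix]
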